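/- Let N ≥ 1 and let u : ℝ × ℝ → ℝ, U : ℝ × ℝ → ℝ^N be smooth solutions of the second-order system u_t = u_{xx} + 2⟨U,U_{xx}⟩ + 2⟨U_x,U_x⟩ + 2u⟨U,U⟩³ + 2⟨U,U⟩⁴ and U_t = -u⟨U,U⟩²U - ⟨U,U⟩³U. Then (i) w := u + ⟨U,U⟩ satisfies the heat equation w_t = w_{xx}; (ii) ∂_t( ⟨U,U⟩^{-2} ) = 4w wherever ⟨U,U⟩ ≠ 0; and (iii) ∂_t( ⟨U,U⟩^{-1/2} U ) = 0 wherever ⟨U,U⟩ ≠ 0. -/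

import Mathlib

noncomputable section

/-- partial derivative in the first (space) variable -/
def pdx (f : ℝ → ℝ → ℝ) : ℝ → ℝ → ℝ := fun x t => deriv (fun y => f y t) x

/-- partial derivative in the second (time) variable -/
def pdt (f : ℝ → ℝ → ℝ) : ℝ → ℝ → ℝ := fun x t => deriv (fun s => f x s) t

/-- smoothness of a function of two real variables -/
def smooth2 (f : ℝ → ℝ → ℝ) : Prop := ContDiff ℝ (⊤ : ℕ∞) (fun p : ℝ × ℝ => f p.1 p.2)

/-- componentwise partial x-derivative of a vector-valued function -/
def pdxV {N : ℕ} (U : ℝ → ℝ → Fin N → ℝ) : ℝ → ℝ → Fin N → ℝ :=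
  fun x t i => deriv (fun y => U y t i) x

/-- componentwise partial t-derivative of a vector-valued function -/
def pdtV {N : ℕ} (U : ℝ → ℝ → Fin N → ℝ) : ℝ → ℝ → Fin N → ℝ :=
  fun x t i => deriv (fun s => U x s i) t

/-- pointwise Euclidean inner product of two vector-valued functions -/
def ip {N : ℕ} (A B : ℝ → ℝ → Fin N → ℝ) : ℝ → ℝ → ℝ :=
  fun x t => ∑ i, A x t i * B x t i

/-- componentwise smoothness of a vector-valued function of two real variables -/
def smooth2V {N : ℕ} (U : ℝ → ℝ → Fin N → ℝ) : Prop :=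
  ∀ i, ContDiff ℝ (⊤ : ℕ∞) (fun p : ℝ × ℝ => U p.1 p.2 i)

lemma sm_diffx {f : ℝ → ℝ → ℝ} (hf : smooth2 f) (t x : ℝ) :
    DifferentiableAt ℝ (fun y => f y t) x :=
  ((hf.comp (contDiff_id.prodMk contDiff_const)).differentiable (by simp)) x

lemma sm_difft {f : ℝ → ℝ → ℝ} (hf : smooth2 f) (x t : ℝ) :
    DifferentiableAt ℝ (fun s => f x s) t :=
  ((hf.comp (contDiff_const.prodMk contDiff_id)).differentiable (by simp)) t

lemma pdx_eq {f : ℝ → ℝ → ℝ} (hf : smooth2 f) (x t : ℝ) :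
    pdx f x t = fderiv ℝ (fun p : ℝ × ℝ => f p.1 p.2) (x, t) (1, 0) := by
  have h1 : HasDerivAt (fun y : ℝ => ((y, t) : ℝ × ℝ)) ((1 : ℝ), (0 : ℝ)) x :=
    (hasDerivAt_id x).prodMk (hasDerivAt_const x t)
  have h2 := ((hf.differentiable (by simp)) (x, t)).hasFDerivAt
  exact (h2.comp_hasDerivAt x h1).deriv

lemma pdt_eq {f : ℝ → ℝ → ℝ} (hf : smooth2 f) (x t : ℝ) :
    pdt f x t = fderiv ℝ (fun p : ℝ × ℝ => f p.1 p.2) (x, t) (0, 1) := by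
  have h1 : HasDerivAt (fun s : ℝ => ((x, s) : ℝ × ℝ)) ((0 : ℝ), (1 : ℝ)) t :=
    (hasDerivAt_const t x).prodMk (hasDerivAt_id t)
  have h2 := ((hf.differentiable (by simp)) (x, t)).hasFDerivAt
  exact (h2.comp_hasDerivAt t h1).deriv

lemma smooth2_pdx {f : ℝ → ℝ → ℝ} (hf : smooth2 f) : smooth2 (pdx f) := by
  have h : (fun p : ℝ × ℝ => pdx f p.1 p.2)
      = fun p : ℝ × ℝ => fderiv ℝ (fun q : ℝ × ℝ => f q.1 q.2) p (1, 0) := by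
    funext p; exact pdx_eq hf p.1 p.2
  unfold smooth2
  rw [h]
  exact (hf.fderiv_right (by simp)).clm_apply contDiff_const

lemma smooth2V_pdxV {N : ℕ} {U : ℝ → ℝ → Fin N → ℝ} (hU : smooth2V U) :
    smooth2V (pdxV U) := fun i => smooth2_pdx (f := fun x t => U x t i) (hU i)

lemma smooth2_ip {N : ℕ} {A B : ℝ → ℝ → Fin N → ℝ} (hA : smooth2V A) (hB : smooth2V B) :
    smooth2 (ip A B) := by
  unfold smooth2 ip
  exact ContDiff.sum fun i _ => (hA i).mul (hB i)

lemma pdt_ip {N : ℕ} {A B : ℝ → ℝ → Fin N → ℝ} (hA : smooth2V A) (hB : smooth2V B) (x t : ℝ) :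
    pdt (ip A B) x t = ip (pdtV A) B x t + ip A (pdtV B) x t := by
  have hAd : ∀ i : Fin N, DifferentiableAt ℝ (fun s => A x s i) t :=
    fun i => sm_difft (f := fun x t => A x t i) (hA i) x t
  have hBd : ∀ i : Fin N, DifferentiableAt ℝ (fun s => B x s i) t :=
    fun i => sm_difft (f := fun x t => B x t i) (hB i) x t
  show deriv (fun s => ∑ i, A x s i * B x s i) t = _
  rw [deriv_fun_sum (fun i _ => (hAd i).fun_mul (hBd i))]
  unfold ip pdtV
  rw [← Finset.sum_add_distrib]
  exact Finset.sum_congr rfl fun i _ => deriv_mul (hAd i) (hBd i)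

lemma pdx_ip {N : ℕ} {A B : ℝ → ℝ → Fin N → ℝ} (hA : smooth2V A) (hB : smooth2V B) (x t : ℝ) :
    pdx (ip A B) x t = ip (pdxV A) B x t + ip A (pdxV B) x t := by
  have hAd : ∀ i : Fin N, DifferentiableAt ℝ (fun y => A y t i) x :=
    fun i => sm_diffx (f := fun x t => A x t i) (hA i) t x
  have hBd : ∀ i : Fin N, DifferentiableAt ℝ (fun y => B y t i) x :=
    fun i => sm_diffx (f := fun x t => B x t i) (hB i) t x
  show deriv (fun y => ∑ i, A y t i * B y t i) x = _
  rw [deriv_fun_sum (fun i _ => (hAd i).fun_mul (hBd i))]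
  unfold ip pdxV
  rw [← Finset.sum_add_distrib]
  exact Finset.sum_congr rfl fun i _ => deriv_mul (hAd i) (hBd i)

lemma ip_comm {N : ℕ} (A B : ℝ → ℝ → Fin N → ℝ) : ip A B = ip B A := by
  funext x t; unfold ip; exact Finset.sum_congr rfl fun i _ => mul_comm _ _

/-- explicit solution procedure for system (7.3). -/
theorem stmt_12 {N : ℕ} (hN : 1 ≤ N) (u : ℝ → ℝ → ℝ) (U : ℝ → ℝ → Fin N → ℝ)
    (hu : smooth2 u) (hU : smooth2V U)
    (heq1 : ∀ x t, pdt u x t = pdx (pdx u) x t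
      + 2 * ip U (pdxV (pdxV U)) x t + 2 * ip (pdxV U) (pdxV U) x t
      + 2 * u x t * (ip U U x t) ^ 3 + 2 * (ip U U x t) ^ 4)
    (heq2 : ∀ x t i, pdtV U x t i =
      -u x t * (ip U U x t) ^ 2 * U x t i - (ip U U x t) ^ 3 * U x t i)
    (w : ℝ → ℝ → ℝ)
    (hw : ∀ x t, w x t = u x t + ip U U x t) :
    (∀ x t, pdt w x t = pdx (pdx w) x t) ∧
    (∀ x t, ip U U x t ≠ 0 →
      pdt (fun x t => ((ip U U x t) ^ 2)⁻¹) x t = 4 * w x t) ∧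
    (∀ x t i, ip U U x t ≠ 0 →
      pdtV (fun x t i => (Real.sqrt (ip U U x t))⁻¹ * U x t i) x t i = 0) := by

  have hwf : w = fun x t => u x t + ip U U x t := funext fun x => funext fun t => hw x t
  subst hwf
  have hφ : smooth2 (ip U U) := smooth2_ip hU hU
  -- value of ip U (pdtV U)
  have hipUt : ∀ x t, ip U (pdtV U) x t
      = (-u x t * (ip U U x t) ^ 2 - (ip U U x t) ^ 3) * ip U U x t := by
    intro x t
    show (∑ i, U x t i * pdtV U x t i) = _
    have : (∑ i, U x t i * pdtV U x t i)
        = ∑ i, (-u x t * (ip U U x t) ^ 2 - (ip U U x t) ^ 3) * (U x t i * U x t i) := by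
      refine Finset.sum_congr rfl fun i _ => ?_
      rw [heq2 x t i]; ring
    rw [this, ← Finset.mul_sum]
    rfl
  -- time derivative of ip U U
  have hφt : ∀ x t, pdt (ip U U) x t
      = -2 * u x t * (ip U U x t) ^ 3 - 2 * (ip U U x t) ^ 4 := by
    intro x t
    rw [pdt_ip hU hU, ip_comm (pdtV U) U, hipUt]
    ring
  -- x derivative of ip U U
  have hφx : ∀ x t, pdx (ip U U) x t = 2 * ip U (pdxV U) x t := by
    intro x t
    rw [pdx_ip hU hU, ip_comm (pdxV U) U]
    ring
  have hUx : smooth2V (pdxV U) := smooth2V_pdxV hU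
  -- second x derivative of ip U U
  have hφxx : ∀ x t, pdx (pdx (ip U U)) x t
      = 2 * ip (pdxV U) (pdxV U) x t + 2 * ip U (pdxV (pdxV U)) x t := by
    intro x t
    have h1 : pdx (ip U U) = fun x t => 2 * ip U (pdxV U) x t :=
      funext fun x => funext fun t => hφx x t
    rw [h1]
    have hd : DifferentiableAt ℝ (fun y => ip U (pdxV U) y t) x :=
      sm_diffx (smooth2_ip hU hUx) t x
    show deriv (fun y => 2 * ip U (pdxV U) y t) x = _
    rw [deriv_const_mul 2 hd]
    have : deriv (fun y => ip U (pdxV U) y t) x = pdx (ip U (pdxV U)) x t := rfl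
    rw [this, pdx_ip hU hUx]
    ring
  refine ⟨?_, ?_, ?_⟩
  · -- (i) heat equation
    intro x t
    have hwt : pdt (fun x t => u x t + ip U U x t) x t = pdt u x t + pdt (ip U U) x t := by
      show deriv (fun s => u x s + ip U U x s) t = _
      rw [deriv_fun_add (sm_difft hu x t) (sm_difft hφ x t)]; rfl
    have hwx : pdx (fun x t => u x t + ip U U x t) = fun x t => pdx u x t + pdx (ip U U) x t := by
      funext x t
      show deriv (fun y => u y t + ip U U y t) x = _
      rw [deriv_fun_add (sm_diffx hu t x) (sm_diffx hφ t x)]; rfl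
    have hwxx : pdx (pdx (fun x t => u x t + ip U U x t)) x t
        = pdx (pdx u) x t + pdx (pdx (ip U U)) x t := by
      rw [hwx]
      show deriv (fun y => pdx u y t + pdx (ip U U) y t) x = _
      rw [deriv_fun_add (sm_diffx (smooth2_pdx hu) t x) (sm_diffx (smooth2_pdx hφ) t x)]; rfl
    rw [hwt, hwxx, heq1 x t, hφt x t, hφxx x t]
    ring
  · -- (ii)
    intro x t hne
    have hφd : HasDerivAt (fun s => ip U U x s)
        (-2 * u x t * (ip U U x t) ^ 3 - 2 * (ip U U x t) ^ 4) t := by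
      have := (sm_difft hφ x t).hasDerivAt
      rwa [show deriv (fun s => ip U U x s) t = pdt (ip U U) x t from rfl, hφt x t] at this
    have hsq := hφd.pow 2
    have hinv := hsq.inv (pow_ne_zero 2 hne)
    have := hinv.deriv
    simp only [Pi.inv_def, Pi.pow_apply] at this
    show deriv (fun s => ((ip U U x s) ^ 2)⁻¹) t = _
    rw [this]
    field_simp
    ring
  · -- (iii)
    intro x t i hne
    have hpos : 0 < ip U U x t :=
      lt_of_le_of_ne (Finset.sum_nonneg fun i _ => mul_self_nonneg _) (Ne.symm hne)
    have hφd : HasDerivAt (fun s => ip U U x s)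
        (-2 * u x t * (ip U U x t) ^ 3 - 2 * (ip U U x t) ^ 4) t := by
      have := (sm_difft hφ x t).hasDerivAt
      rwa [show deriv (fun s => ip U U x s) t = pdt (ip U U) x t from rfl, hφt x t] at this
    have hsqrt : HasDerivAt (fun s => Real.sqrt (ip U U x s))
        (1 / (2 * Real.sqrt (ip U U x t)) *
          (-2 * u x t * (ip U U x t) ^ 3 - 2 * (ip U U x t) ^ 4)) t :=
      (Real.hasDerivAt_sqrt hne).comp t hφd
    have hsne : Real.sqrt (ip U U x t) ≠ 0 := (Real.sqrt_pos.mpr hpos).ne'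
    have hinv := hsqrt.inv hsne
    have hUd : HasDerivAt (fun s => U x s i)
        (-u x t * (ip U U x t) ^ 2 * U x t i - (ip U U x t) ^ 3 * U x t i) t := by
      have := (sm_difft (f := fun x t => U x t i) (hU i) x t).hasDerivAt
      rwa [show deriv (fun s => U x s i) t = pdtV U x t i from rfl, heq2 x t i] at this
    have hmul := hinv.mul hUd
    have hval := hmul.deriv
    simp only [Pi.mul_def, Pi.inv_def] at hval
    show deriv (fun s => (Real.sqrt (ip U U x s))⁻¹ * U x s i) t = 0
    rw [hval]
    have hs2 : ip U U x t = Real.sqrt (ip U U x t) ^ 2 := (Real.sq_sqrt hpos.le).symm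
    rw [hs2]
    field_simp
    rw [Real.sqrt_sq (Real.sqrt_nonneg _)]
    ring
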